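/- arXiv:math/0306179 — 4 statements merged into one kernel-verified Lean document; each statement's English description precedes it below -/
import Mathlib

section
/- Let S be a cofibrantly generated model category, C a small category, and let D and D′ be subsets of the objects of C that are retract equivalent in C, i.e. every object of D is a retract in C of some object of D′ and every object of D′ is a retract in C of some object of D. Then the model structures U_S(C,D) and U_S(C,D′) on S^C coincide: they have the same weak equivalences, the same fibrations and the same cofibrations. -/
/-! Preliminaries: basic notions of homotopical algebra (lifting properties,
model structures, transfinite compositions, relative cell complexes, smallness,
cofibrant generation) and the relative model structure `U_S(C,D)` on functor
categories, following Balmer–Matthey, "Codescent theory I". -/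

universe w v u u₂ u₃

open CategoryTheory Limits

namespace Codescent

set_option linter.dupNamespace false

section Lifting

variable {M : Type u} [Category.{v} M]

/-- The class of morphisms having the left lifting property with respect to all
morphisms in `K`. -/
def llp (K : MorphismProperty M) : MorphismProperty M :=
  fun _ _ f => ∀ ⦃X Y : M⦄ (g : X ⟶ Y), K g → HasLiftingProperty f g

/-- The class of morphisms having the right lifting property with respect to all
morphisms in `K`. -/
def rlp (K : MorphismProperty M) : MorphismProperty M :=
  fun _ _ g => ∀ ⦃A B : M⦄ (f : A ⟶ B), K f → HasLiftingProperty f g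

/-- Intersection of two classes of morphisms. -/
def inter (P Q : MorphismProperty M) : MorphismProperty M :=
  fun _ _ f => P f ∧ Q f

/-- `f` is a retract of `g` (as objects of the arrow category). -/
def RetractHom {X Y X' Y' : M} (f : X ⟶ Y) (g : X' ⟶ Y') : Prop :=
  ∃ (i : Arrow.mk f ⟶ Arrow.mk g) (r : Arrow.mk g ⟶ Arrow.mk f), i ≫ r = 𝟙 (Arrow.mk f)

/-- The object `c` is a retract of the object `d`. -/
def IsRetractObj (c d : M) : Prop :=
  ∃ (i : c ⟶ d) (r : d ⟶ c), i ≫ r = 𝟙 c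

/-- A functorial factorization of every morphism as a morphism in `L` followed by
a morphism in `R`. -/
structure FunctorialFact (L R : MorphismProperty M) where
  Z : Arrow M ⥤ M
  ι : (Arrow.leftFunc : Arrow M ⥤ M) ⟶ Z
  π : Z ⟶ (Arrow.rightFunc : Arrow M ⥤ M)
  fac : ∀ f : Arrow M, ι.app f ≫ π.app f = f.hom
  mem_left : ∀ f : Arrow M, L (ι.app f)
  mem_right : ∀ f : Arrow M, R (π.app f)

end Lifting

/-- A (Quillen) model structure on a category `M`: classes of weak equivalences,
cofibrations and fibrations satisfying MC2–MC5 (MC1, completeness and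
cocompleteness, is imposed separately as `HasLimits`/`HasColimits`). -/
structure ModelStructure (M : Type u) [Category.{v} M] where
  weq : MorphismProperty M
  cof : MorphismProperty M
  fib : MorphismProperty M
  /-- MC2, two-out-of-three -/
  weq_comp : ∀ {X Y Z : M} (f : X ⟶ Y) (g : Y ⟶ Z), weq f → weq g → weq (f ≫ g)
  weq_cancel_left : ∀ {X Y Z : M} (f : X ⟶ Y) (g : Y ⟶ Z), weq f → weq (f ≫ g) → weq g
  weq_cancel_right : ∀ {X Y Z : M} (f : X ⟶ Y) (g : Y ⟶ Z), weq g → weq (f ≫ g) → weq f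
  /-- MC3, closure under retracts -/
  weq_retract : ∀ {X Y X' Y' : M} (f : X ⟶ Y) (g : X' ⟶ Y'), RetractHom f g → weq g → weq f
  cof_retract : ∀ {X Y X' Y' : M} (f : X ⟶ Y) (g : X' ⟶ Y'), RetractHom f g → cof g → cof f
  fib_retract : ∀ {X Y X' Y' : M} (f : X ⟶ Y) (g : X' ⟶ Y'), RetractHom f g → fib g → fib f
  /-- MC4, lifting -/
  cof_lift : ∀ {A B X Y : M} (f : A ⟶ B) (g : X ⟶ Y),
    cof f → weq g → fib g → HasLiftingProperty f g
  fib_lift : ∀ {A B X Y : M} (f : A ⟶ B) (g : X ⟶ Y),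
    weq f → cof f → fib g → HasLiftingProperty f g
  /-- MC5, functorial factorizations -/
  fact₁ : FunctorialFact (M := M) cof (inter weq fib)
  fact₂ : FunctorialFact (M := M) (inter weq cof) fib

section Transfinite

/-- A well-ordered type (with bottom element and successors), the index for
transfinite compositions (a "λ-sequence" index). -/
structure WOType : Type (w + 1) where
  carrier : Type w
  [lin : LinearOrder carrier]
  [succ : SuccOrder carrier]
  [bot : OrderBot carrier]
  [wf : WellFoundedLT carrier]

attribute [instance] WOType.lin WOType.succ WOType.bot WOType.wf

variable {M : Type u} [Category.{v} M] {N : Type u₂} [Category.{v} N]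

/-- The class of pushouts of morphisms of `K`. -/
def pushoutsOf (K : MorphismProperty M) : MorphismProperty M :=
  fun X Y f => ∃ (A B : M) (g : A ⟶ B) (t : A ⟶ X) (b : B ⟶ Y), K g ∧ IsPushout g t b f

/-- The inclusion functor of `{i // i < j}` into a preorder `J`. -/
def iioIncl {J : Type w} [Preorder J] (j : J) : {i : J // i < j} ⥤ J where
  obj i := i.1
  map {i i'} h := homOfLE (Subtype.coe_le_coe.mpr (leOfHom h))

/-- The cocone on the restriction of `F : J ⥤ M` to `{i // i < j}` with apex `F.obj j`. -/
def iioCocone {J : Type w} [Preorder J] (F : J ⥤ M) (j : J) : Cocone (iioIncl j ⋙ F) where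
  pt := F.obj j
  ι :=
    { app := fun i => F.map (homOfLE i.2.le)
      naturality := fun i i' h => by
        dsimp
        rw [Category.comp_id, ← F.map_comp]
        rfl }

/-- `F : J ⥤ M` is a (continuous) transfinite sequence all of whose successor
maps lie in the class `P`. -/
structure IsChainOf (P : MorphismProperty M) {J : Type w} [LinearOrder J] [SuccOrder J]
    (F : J ⥤ M) : Prop where
  succ_mem : ∀ j : J, ¬ IsMax j → P (F.map (homOfLE (Order.le_succ j)))
  limit_isColimit : ∀ j : J, Order.IsSuccLimit j → Nonempty (IsColimit (iioCocone F j))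

/-- The class of relative `K`-cells: transfinite compositions of pushouts of
morphisms of `K`. -/
def cell (K : MorphismProperty M) : MorphismProperty M :=
  fun X Y f => ∃ (J : WOType.{v}) (F : J.carrier ⥤ M)
    (_ : IsChainOf (pushoutsOf K) F) (c : Cocone F) (_ : IsColimit c)
    (e : X ≅ F.obj ⊥) (e' : c.pt ≅ Y), f = e.hom ≫ c.ι.app ⊥ ≫ e'.hom

/-- A linear order is `κ`-filtered when it has no top element and every subset of
cardinality at most `κ` is bounded above. -/
def KFiltered (κ : Cardinal.{w}) (J : Type w) [LinearOrder J] : Prop :=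
  (∀ j : J, ∃ j' : J, j < j') ∧
    ∀ s : Set J, Cardinal.mk s ≤ κ → ∃ j : J, ∀ i ∈ s, i ≤ j

/-- The object `d` is small relative to the class `K`: for some cardinal `κ`,
morphisms from `d` into the colimit of any `κ`-filtered well-ordered continuous
sequence with successor maps in `K` factor, essentially uniquely, through some
stage of the sequence. -/
def IsSmallRel (d : M) (K : MorphismProperty M) : Prop :=
  ∃ κ : Cardinal.{v}, ∀ (J : WOType.{v}), KFiltered κ J.carrier →
    ∀ (F : J.carrier ⥤ M), IsChainOf K F →
    ∀ (c : Cocone F), IsColimit c →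
      (∀ g : d ⟶ c.pt, ∃ (j : J.carrier) (h : d ⟶ F.obj j), h ≫ c.ι.app j = g) ∧
      (∀ (j j' : J.carrier) (h : d ⟶ F.obj j) (h' : d ⟶ F.obj j'),
        h ≫ c.ι.app j = h' ≫ c.ι.app j' →
          ∃ (k : J.carrier) (l : j ≤ k) (l' : j' ≤ k),
            h ≫ F.map (homOfLE l) = h' ≫ F.map (homOfLE l'))

/-- The model structure `P` is cofibrantly generated, with set of generating
cofibrations `I` and set of generating trivial cofibrations `J`. -/
structure IsCofGen (P : ModelStructure M) (I J : MorphismProperty M) : Prop where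
  small_I : ∀ ⦃X Y : M⦄ (f : X ⟶ Y), I f → IsSmallRel X (cell I)
  small_J : ∀ ⦃X Y : M⦄ (f : X ⟶ Y), J f → IsSmallRel X (cell J)
  fib_eq : P.fib = rlp J
  trivFib_eq : inter P.weq P.fib = rlp I

/-- A functor preserves pushouts. -/
def PreservesPushouts (G : M ⥤ N) : Prop :=
  ∀ ⦃Z X Y P : M⦄ (f : Z ⟶ X) (g : Z ⟶ Y) (inl : X ⟶ P) (inr : Y ⟶ P),
    IsPushout f g inl inr → IsPushout (G.map f) (G.map g) (G.map inl) (G.map inr)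

/-- A functor preserves transfinite compositions: it preserves colimits of
diagrams indexed by well-ordered types. -/
def PreservesTransfiniteCompositions (G : M ⥤ N) : Prop :=
  ∀ (J : Type v) [LinearOrder J] [WellFoundedLT J] (F : J ⥤ M) (c : Cocone F),
    IsColimit c → Nonempty (IsColimit (G.mapCocone c))

/-- The image `{G(f) | f ∈ K}` of a class of morphisms under a functor. -/
def strictImage (G : M ⥤ N) (K : MorphismProperty M) : MorphismProperty N :=
  fun _ _ g => ∃ (A B : M) (f : A ⟶ B), K f ∧ Arrow.mk (G.map f) = Arrow.mk g

end Transfinite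

section CofRep

variable {M : Type u} [Category.{v} M]

/-- The cofibrant replacement of `X` given by the functorial factorization of
`∅ ⟶ X`. -/
noncomputable def cofRep (P : ModelStructure M) [HasInitial M] (X : M) : M :=
  P.fact₁.Z.obj (Arrow.mk (initial.to X))

/-- The canonical trivial fibration `QX ⟶ X` from the cofibrant replacement. -/
noncomputable def cofRepHom (P : ModelStructure M) [HasInitial M] (X : M) :
    cofRep P X ⟶ X :=
  P.fact₁.π.app (Arrow.mk (initial.to X))

/-- The functor `X ↦ (∅ ⟶ X)` to the arrow category. -/
noncomputable def toArrowInit (M : Type u) [Category.{v} M] [HasInitial M] : M ⥤ Arrow M where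
  obj X := Arrow.mk (initial.to X)
  map {X Y} f := Arrow.homMk (u := 𝟙 _) (v := f) (by apply initial.hom_ext)

/-- The cofibrant replacement functor of the model structure `P`. -/
noncomputable def qFunctor (P : ModelStructure M) [HasInitial M] : M ⥤ M :=
  toArrowInit M ⋙ P.fact₁.Z

end CofRep

section FunctorCat

variable {S : Type u} [Category.{v} S]

/-- The class of morphisms in `S^C` that belong objectwise on `D` to the class `P`;
for `P` the weak equivalences (resp. fibrations) of a model structure these are
the `D`-weak equivalences (resp. the `D`-fibrations). -/
def objProp {C : Type v} [SmallCategory C] (P : MorphismProperty S) (D : Set C) :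
    MorphismProperty (C ⥤ S) :=
  fun _ _ η => ∀ d ∈ D, P (η.app d)

/-- Trivial `D`-fibrations in `S^C`. -/
def dTrivFib {C : Type v} [SmallCategory C] (P : ModelStructure S) (D : Set C) :
    MorphismProperty (C ⥤ S) :=
  inter (objProp P.weq D) (objProp P.fib D)

/-- `D`-cofibrations in `S^C`: the morphisms having the left lifting property with
respect to all trivial `D`-fibrations. -/
def dCof {C : Type v} [SmallCategory C] (P : ModelStructure S) (D : Set C) :
    MorphismProperty (C ⥤ S) :=
  llp (dTrivFib P D)

variable [HasColimits S]

/-- `D`-cofibrant objects of `S^C`. -/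
def dCofibrant {C : Type v} [SmallCategory C] (P : ModelStructure S) (D : Set C)
    (X : C ⥤ S) : Prop :=
  dCof P D (initial.to X)

/-- The model structure `U_S(C,D)` on `S^C`: a model structure whose weak
equivalences are the `D`-weak equivalences, whose fibrations are the
`D`-fibrations and whose cofibrations are the `D`-cofibrations. -/
structure RelStructure (P : ModelStructure S) (C : Type v) [SmallCategory C] (D : Set C) where
  N : ModelStructure (C ⥤ S)
  weq_eq : N.weq = objProp P.weq D
  fib_eq : N.fib = objProp P.fib D
  cof_eq : N.cof = dCof P D

/-- `X` satisfies `D`-codescent at `c`: the cofibrant replacement morphism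
`Q_{C,D} X ⟶ X` in `U_S(C,D)` is a weak equivalence at `c`. -/
def CodescentAt {C : Type v} [SmallCategory C] (P : ModelStructure S) {D : Set C}
    (U : RelStructure P C D) (X : C ⥤ S) (c : C) : Prop :=
  P.weq ((cofRepHom U.N X).app c)

/-- `X` satisfies `D`-codescent: the cofibrant replacement morphism
`Q_{C,D} X ⟶ X` is a `C`-weak equivalence. -/
def Codescent {C : Type v} [SmallCategory C] (P : ModelStructure S) {D : Set C}
    (U : RelStructure P C D) (X : C ⥤ S) : Prop :=
  ∀ c : C, CodescentAt P U X c

/-- The coproduct property for weak equivalences. -/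
def CoproductProperty (P : ModelStructure S) : Prop :=
  ∀ (ι : Type v) (X Y : ι → S) (f : ∀ i, X i ⟶ Y i),
    (∀ i, P.weq (f i)) ↔ P.weq (Limits.Sigma.map f)

end FunctorCat

section Pairs

variable {A : Type v} [SmallCategory A] {C : Type v} [SmallCategory C]

/-- Two subsets of objects are retract equivalent. -/
def RetractEquiv (D D' : Set C) : Prop :=
  (∀ d ∈ D, ∃ d' ∈ D', IsRetractObj d d') ∧ (∀ d' ∈ D', ∃ d ∈ D, IsRetractObj d' d)

/-- `Φ : (A,B) ⟶ (C,D)` is left glossy. -/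
def LeftGlossy (Φ : A ⥤ C) (B : Set A) : Prop :=
  ∀ b ∈ B, ∃ (ι : Type v) (tgt : ι → A) (β : ∀ i, Φ.obj b ⟶ Φ.obj (tgt i)),
    (∀ i, tgt i ∈ B) ∧
      ∀ (a : A) (α : Φ.obj b ⟶ Φ.obj a),
        ∃! p : (i : ι) × (tgt i ⟶ a), β p.1 ≫ Φ.map p.2 = α

/-- `Φ : (A,B) ⟶ (C,D)` is right glossy. -/
def RightGlossy (Φ : A ⥤ C) (B : Set A) : Prop :=
  ∀ b ∈ B, ∃ (ι : Type v) (src : ι → A) (β : ∀ j, Φ.obj (src j) ⟶ Φ.obj b),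
    (∀ j, src j ∈ B) ∧
      ∀ (a : A) (α : Φ.obj a ⟶ Φ.obj b),
        ∃! p : (j : ι) × (a ⟶ src j), Φ.map p.2 ≫ β p.1 = α

/-- A subset of objects is left absorbant: the source of any morphism whose
target lies in the subset also lies in the subset. -/
def LeftAbsorbant (D : Set C) : Prop :=
  ∀ ⦃c c' : C⦄, (c ⟶ c') → c' ∈ D → c ∈ D

end Pairs

end Codescent
open Codescent

/-- If `c` is a retract of `d` in `C`, then `η.app c` is a retract of `η.app d`. -/
lemma retractHom_app {S : Type u} [Category.{v} S] {C : Type v} [SmallCategory C]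
    {X Y : C ⥤ S} (η : X ⟶ Y) {c d : C} (hcd : IsRetractObj c d) :
    RetractHom (η.app c) (η.app d) := by
  obtain ⟨i, r, hir⟩ := hcd
  refine ⟨Arrow.homMk (u := X.map i) (v := Y.map i) (η.naturality i),
    Arrow.homMk (u := X.map r) (v := Y.map r) (η.naturality r), ?_⟩
  ext
  · simp [← X.map_comp, hir]
  · simp [← Y.map_comp, hir]

lemma objProp_subset {S : Type u} [Category.{v} S] {C : Type v} [SmallCategory C]
    (Q : MorphismProperty S)
    (hQ : ∀ {X Y X' Y' : S} (f : X ⟶ Y) (g : X' ⟶ Y'), RetractHom f g → Q g → Q f)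
    (D D' : Set C) (hDD' : ∀ d ∈ D, ∃ d' ∈ D', IsRetractObj d d') :
    ∀ {X Y : C ⥤ S} (η : X ⟶ Y), objProp Q D' η → objProp Q D η := by
  intro X Y η hη d hd
  obtain ⟨d', hd', hret⟩ := hDD' d hd
  exact hQ _ _ (retractHom_app η hret) (hη d' hd')

lemma objProp_eq {S : Type u} [Category.{v} S] {C : Type v} [SmallCategory C]
    (Q : MorphismProperty S)
    (hQ : ∀ {X Y X' Y' : S} (f : X ⟶ Y) (g : X' ⟶ Y'), RetractHom f g → Q g → Q f)
    (D D' : Set C) (h : RetractEquiv D D') : objProp Q D = objProp Q D' := by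
  ext X Y η
  exact ⟨fun hη => objProp_subset Q hQ D' D h.2 η hη,
    fun hη => objProp_subset Q hQ D D' h.1 η hη⟩

/-- retract equivalent subsets give the same model structure
(Balmer–Matthey, Proposition 3.11). -/
theorem statement_3 {S : Type u} [Category.{v} S] [HasLimits S] [HasColimits S]
    (P : ModelStructure S) (I J : MorphismProperty S) (hcg : IsCofGen P I J)
    (C : Type v) [SmallCategory C] (D D' : Set C) (h : RetractEquiv D D') :
    objProp P.weq D = objProp P.weq D' ∧
    objProp P.fib D = objProp P.fib D' ∧
    dCof P D = dCof P D' := by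
  have hweq := objProp_eq P.weq (fun f g => P.weq_retract f g) D D' h
  have hfib := objProp_eq P.fib (fun f g => P.fib_retract f g) D D' h
  refine ⟨hweq, hfib, ?_⟩
  unfold dCof dTrivFib
  rw [hweq, hfib]
end

section
/- Let S be a cofibrantly generated model category and (C, D) a pair of small categories. (i) If D ⊆ E ⊆ obj(C), then in S^C every D-cofibration is an E-cofibration and every trivial D-cofibration is a trivial E-cofibration; in particular every D-cofibrant object is E-cofibrant. (ii) If a morphism η in S^C is a D-cofibration (respectively a trivial D-cofibration), then η(c) is a cofibration (respectively a trivial cofibration) in S for every object c of C; in particular a D-cofibrant diagram X ∈ S^C is objectwise cofibrant, i.e. X(c) is cofibrant in S for every c ∈ C. -/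
/-! Preliminaries: basic notions of homotopical algebra (lifting properties,
model structures, transfinite compositions, relative cell complexes, smallness,
cofibrant generation) and the relative model structure `U_S(C,D)` on functor
categories, following Balmer–Matthey, "Codescent theory I". -/

universe w v u u₂ u₃

open CategoryTheory Limits

namespace Codescent

set_option linter.dupNamespace false

section Aux

variable {S : Type u} [Category.{v} S] {C : Type v} [SmallCategory C]

/-- The objectwise arrow diagram of a natural transformation. -/
def arrowDiagram {X Y : C ⥤ S} (η : X ⟶ Y) : C ⥤ Arrow S where
  obj c := Arrow.mk (η.app c)
  map {c c'} u := Arrow.homMk (u := X.map u) (v := Y.map u) (η.naturality u)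

lemma retract_iso_comp {A B X : S} (e : A ≅ B) (f : B ⟶ X) :
    RetractHom (e.hom ≫ f) f :=
  ⟨Arrow.homMk (u := e.hom) (v := (𝟙 X)) (by simp),
   Arrow.homMk (u := e.inv) (v := (𝟙 X)) (by simp), by ext <;> simp⟩

variable {L R : MorphismProperty S} (F : FunctorialFact (M := S) L R)
  {X Y : C ⥤ S} (η : X ⟶ Y)

/-- Objectwise middle object of the functorial factorization. -/
def factZ : C ⥤ S := arrowDiagram η ⋙ F.Z

def factI : X ⟶ factZ F η where
  app c := F.ι.app ((arrowDiagram η).obj c)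
  naturality _ _ u := F.ι.naturality ((arrowDiagram η).map u)

def factP : factZ F η ⟶ Y where
  app c := F.π.app ((arrowDiagram η).obj c)
  naturality _ _ u := F.π.naturality ((arrowDiagram η).map u)

lemma fact_fac (c : C) : (factI F η).app c ≫ (factP F η).app c = η.app c :=
  F.fac ((arrowDiagram η).obj c)

lemma factI_mem (c : C) : L ((factI F η).app c) := F.mem_left _
lemma factP_mem (c : C) : R ((factP F η).app c) := F.mem_right _

/-- Key retract lemma: if `η` is a `D`-cofibration and the objectwise
factorization's second half is a trivial `D`-fibration, then `η` is objectwise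
a retract of the first half. -/
lemma retract_main (P : ModelStructure S) (D : Set C) (hη : dCof P D η)
    (hp : dTrivFib P D (factP F η)) (c : C) :
    RetractHom (η.app c) ((factI F η).app c) := by
  haveI : HasLiftingProperty η (factP F η) := hη _ hp
  have w : factI F η ≫ factP F η = η ≫ 𝟙 Y := by
    ext c'
    simp [fact_fac F η c']
  have sq : CommSq (factI F η) η (factP F η) (𝟙 Y) := ⟨w⟩
  refine ⟨Arrow.homMk (u := 𝟙 (X.obj c)) (v := sq.lift.app c) ?_,
    Arrow.homMk (u := 𝟙 (X.obj c)) (v := (factP F η).app c) ?_, ?_⟩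
  · have := congr_app sq.fac_left c
    dsimp at this ⊢
    simp [this]
  · dsimp
    simp [fact_fac F η c]
  · have := congr_app sq.fac_right c
    ext
    · dsimp; simp
    · dsimp at this ⊢
      simp [this]

end Aux

end Codescent
open Codescent

/-- `D`-cofibrations are `E`-cofibrations for `D ⊆ E`, and are
objectwise cofibrations (Balmer–Matthey, Proposition 3.12). -/
theorem statement_4 {S : Type u} [Category.{v} S] [HasLimits S] [HasColimits S]
    (P : ModelStructure S) (I J : MorphismProperty S) (hcg : IsCofGen P I J)
    {C : Type v} [SmallCategory C] (D E : Set C) (hDE : D ⊆ E) :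
    (∀ ⦃X Y : C ⥤ S⦄ (η : X ⟶ Y), dCof P D η → dCof P E η) ∧
    (∀ ⦃X Y : C ⥤ S⦄ (η : X ⟶ Y), objProp P.weq D η → dCof P D η →
      objProp P.weq E η ∧ dCof P E η) ∧
    (∀ X : C ⥤ S, dCofibrant P D X → dCofibrant P E X) ∧
    (∀ ⦃X Y : C ⥤ S⦄ (η : X ⟶ Y), dCof P D η → ∀ c : C, P.cof (η.app c)) ∧
    (∀ ⦃X Y : C ⥤ S⦄ (η : X ⟶ Y), objProp P.weq D η → dCof P D η →
      ∀ c : C, P.weq (η.app c) ∧ P.cof (η.app c)) ∧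
    (∀ X : C ⥤ S, dCofibrant P D X → ∀ c : C, P.cof (initial.to (X.obj c))) := by
  -- `D`-trivial fibrations become more numerous as the test set shrinks
  have hsub : ∀ {X Y : C ⥤ S} (g : X ⟶ Y), dTrivFib P E g → dTrivFib P D g :=
    fun g hg => ⟨fun d hd => hg.1 d (hDE hd), fun d hd => hg.2 d (hDE hd)⟩
  have h1 : ∀ ⦃X Y : C ⥤ S⦄ (η : X ⟶ Y), dCof P D η → dCof P E η :=
    fun X Y η hη _ _ g hg => hη g (hsub g hg)
  -- objectwise cofibration statement via the factorization/retract argument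
  have h4 : ∀ ⦃X Y : C ⥤ S⦄ (η : X ⟶ Y), dCof P D η → ∀ c : C, P.cof (η.app c) := by
    intro X Y η hη c
    have hp : dTrivFib P D (factP P.fact₁ η) :=
      ⟨fun d _ => (factP_mem P.fact₁ η d).1, fun d _ => (factP_mem P.fact₁ η d).2⟩
    exact P.cof_retract _ _ (retract_main P.fact₁ η P D hη hp c)
      (factI_mem P.fact₁ η c)
  -- objectwise trivial cofibration statement
  have h5 : ∀ ⦃X Y : C ⥤ S⦄ (η : X ⟶ Y), objProp P.weq D η → dCof P D η →
      ∀ c : C, P.weq (η.app c) ∧ P.cof (η.app c) := by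
    intro X Y η hw hη c
    have hp : dTrivFib P D (factP P.fact₂ η) := by
      refine ⟨fun d hd => ?_, fun d _ => factP_mem P.fact₂ η d⟩
      refine P.weq_cancel_left ((factI P.fact₂ η).app d) _
        (factI_mem P.fact₂ η d).1 ?_
      rw [fact_fac]
      exact hw d hd
    have hr := retract_main P.fact₂ η P D hη hp c
    exact ⟨P.weq_retract _ _ hr (factI_mem P.fact₂ η c).1,
      P.cof_retract _ _ hr (factI_mem P.fact₂ η c).2⟩
  have h2 : ∀ ⦃X Y : C ⥤ S⦄ (η : X ⟶ Y), objProp P.weq D η → dCof P D η →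
      objProp P.weq E η ∧ dCof P E η :=
    fun X Y η hw hη => ⟨fun e _ => (h5 η hw hη e).1, h1 η hη⟩
  -- objectwise cofibrancy of `D`-cofibrant objects
  have hinit : ∀ (X : C ⥤ S) (c : C), P.cof ((initial.to X).app c) →
      P.cof (initial.to (X.obj c)) := by
    intro X c h
    have hI : IsInitial ((⊥_ (C ⥤ S)).obj c) :=
      initialIsInitial.isInitialObj ((evaluation C S).obj c) _
    have e : (⊥_ S) ≅ (⊥_ (C ⥤ S)).obj c := initialIsoIsInitial hI
    have : initial.to (X.obj c) = e.hom ≫ (initial.to X).app c :=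
      initial.hom_ext _ _
    rw [this]
    exact P.cof_retract _ _ (retract_iso_comp e _) h
  exact ⟨h1, h2, fun X hX => h1 _ hX,
    h4, h5, fun X hX c => hinit X c (h4 _ hX c)⟩
end

section
/- Let S be a cofibrantly generated model category and (C, D) a pair of small categories. If a morphism η : X → Y in S^C is a D-weak equivalence and both X and Y are D-cofibrant, then η is a C-weak equivalence, i.e. η(c) is a weak equivalence in S for every object c of C. Consequently, the cofibrant replacement functor Q_{C,D} of the model category U_S(C,D) takes D-weak equivalences to C-weak equivalences. -/
/-! Preliminaries: basic notions of homotopical algebra (lifting properties,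
model structures, transfinite compositions, relative cell complexes, smallness,
cofibrant generation) and the relative model structure `U_S(C,D)` on functor
categories, following Balmer–Matthey, "Codescent theory I". -/

universe w v u u₂ u₃

open CategoryTheory Limits

open Codescent

/-! Ken Brown's factorization of a weak equivalence `η : X ⟶ Y` between cofibrant objects,
through a factorization of `X ⨿ Y ⟶ Y`, writes `η` as a trivial cofibration followed by a
retraction of another trivial cofibration. Trivial cofibrations of `U_S(C,D)` are objectwise
weak equivalences on all of `C`: evaluation at `c` has a right adjoint, `B ↦ (d ↦ ∏_{d ⟶ c} B)`,
which sends fibrations of `S` to `D`-fibrations. Two-out-of-three then makes `η` a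
`C`-weak equivalence. The cofibrant replacement reduces the second claim to the first. -/

namespace Codescent

lemma RetractHom.of_retractArrow {M : Type u} [Category.{v} M] {X Y X' Y' : M}
    {f : X ⟶ Y} {g : X' ⟶ Y'} (h : RetractArrow f g) : RetractHom f g :=
  ⟨h.i, h.r, h.retract⟩

namespace ModelStructure

variable {M : Type u} [Category.{v} M] (N : ModelStructure M)

lemma cof_of_llp {X Y : M} {f : X ⟶ Y}
    (h : ∀ ⦃A B : M⦄ (g : A ⟶ B), N.weq g → N.fib g → HasLiftingProperty f g) : N.cof f := by
  have hp := N.fact₁.mem_right (Arrow.mk f)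
  exact N.cof_retract _ _
    (.of_retractArrow (@RetractArrow.ofLeftLiftingProperty _ _ _ _ _ f _ _
      (N.fact₁.fac (Arrow.mk f)) (h _ hp.1 hp.2)))
    (N.fact₁.mem_left _)

lemma fib_of_rlp {X Y : M} {g : X ⟶ Y}
    (h : ∀ ⦃A B : M⦄ (f : A ⟶ B), N.weq f → N.cof f → HasLiftingProperty f g) : N.fib g := by
  have hi := N.fact₂.mem_left (Arrow.mk g)
  exact N.fib_retract _ _
    (.of_retractArrow (@RetractArrow.ofRightLiftingProperty _ _ _ _ _ g _ _
      (N.fact₂.fac (Arrow.mk g)) (h _ hi.1 hi.2)))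
    (N.fact₂.mem_right _)

lemma weq_of_llp_fib {X Y : M} {f : X ⟶ Y}
    (h : ∀ ⦃A B : M⦄ (g : A ⟶ B), N.fib g → HasLiftingProperty f g) : N.weq f :=
  N.weq_retract _ _
    (.of_retractArrow (@RetractArrow.ofLeftLiftingProperty _ _ _ _ _ f _ _
      (N.fact₂.fac (Arrow.mk f)) (h _ (N.fact₂.mem_right (Arrow.mk f)))))
    (N.fact₂.mem_left _).1

lemma weq_id (X : M) : N.weq (𝟙 X) :=
  N.weq_of_llp_fib fun _ _ _ _ => inferInstance

lemma cof_id (X : M) : N.cof (𝟙 X) :=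
  N.cof_of_llp fun _ _ _ _ _ => inferInstance

lemma cof_comp {X Y Z : M} {f : X ⟶ Y} {g : Y ⟶ Z} (hf : N.cof f) (hg : N.cof g) :
    N.cof (f ≫ g) :=
  N.cof_of_llp fun _ _ p hw hp =>
    have := N.cof_lift f p hf hw hp
    have := N.cof_lift g p hg hw hp
    inferInstance

lemma cof_of_isPushout {X Y Z W : M} {s : X ⟶ Z} {f : X ⟶ Y} {g : Z ⟶ W} {t : Y ⟶ W}
    (h : IsPushout s f g t) (hf : N.cof f) : N.cof g :=
  N.cof_of_llp fun _ _ p hw hp =>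
    have := N.cof_lift f p hf hw hp
    h.hasLiftingProperty p

lemma weq_qFunctor_map [HasInitial M] {X Y : M} {η : X ⟶ Y} (hη : N.weq η) :
    N.weq ((qFunctor N).map η) := by
  have hπ : (qFunctor N).map η ≫ N.fact₁.π.app (Arrow.mk (initial.to Y)) =
      N.fact₁.π.app (Arrow.mk (initial.to X)) ≫ η :=
    N.fact₁.π.naturality ((toArrowInit M).map η)
  refine N.weq_cancel_right _ _ (N.fact₁.mem_right (Arrow.mk (initial.to Y))).1 ?_
  rw [hπ]
  exact N.weq_comp _ _ (N.fact₁.mem_right _).1 hη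

lemma cof_initial_to_qFunctor_obj [HasInitial M] (X : M) :
    N.cof (initial.to ((qFunctor N).obj X)) := by
  have hι : initial.to ((qFunctor N).obj X) = N.fact₁.ι.app (Arrow.mk (initial.to X)) :=
    initial.hom_ext _ _
  rw [hι]
  exact N.fact₁.mem_left _

theorem kenBrown [HasInitial M] [HasBinaryCoproducts M] (W : MorphismProperty M)
    (comp : ∀ ⦃X Y Z : M⦄ (f : X ⟶ Y) (g : Y ⟶ Z), W f → W g → W (f ≫ g))
    (cancel_left : ∀ ⦃X Y Z : M⦄ (f : X ⟶ Y) (g : Y ⟶ Z), W f → W (f ≫ g) → W g)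
    (of_weq_cof : ∀ ⦃X Y : M⦄ (f : X ⟶ Y), N.cof (initial.to X) → N.weq f → N.cof f → W f)
    {X Y : M} {η : X ⟶ Y} (hX : N.cof (initial.to X)) (hY : N.cof (initial.to Y))
    (hη : N.weq η) : W η := by
  let φ := Arrow.mk (coprod.desc η (𝟙 Y))
  let i : X ⨿ Y ⟶ _ := N.fact₁.ι.app φ
  let p : _ ⟶ Y := N.fact₁.π.app φ
  have hp := (N.fact₁.mem_right φ).1
  have hip : i ≫ p = coprod.desc η (𝟙 Y) := N.fact₁.fac φ
  have hap : (coprod.inl ≫ i) ≫ p = η := by rw [Category.assoc, hip, coprod.inl_desc]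
  have hbp : (coprod.inr ≫ i) ≫ p = 𝟙 Y := by rw [Category.assoc, hip, coprod.inr_desc]
  have pushout := IsPushout.of_hasBinaryCoproduct' X Y
  have ha : W (coprod.inl ≫ i) := of_weq_cof _ hX
    (N.weq_cancel_right _ p hp (hap ▸ hη))
    (N.cof_comp (N.cof_of_isPushout pushout hY) (N.fact₁.mem_left φ))
  have hb : W (coprod.inr ≫ i) := of_weq_cof _ hY
    (N.weq_cancel_right _ p hp (hbp ▸ N.weq_id Y))
    (N.cof_comp (N.cof_of_isPushout pushout.flip hX) (N.fact₁.mem_left φ))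
  have hid : W (𝟙 Y) := of_weq_cof _ hY (N.weq_id Y) (N.cof_id Y)
  exact hap ▸ comp _ _ ha (cancel_left _ p hb (hbp ▸ hid))

end ModelStructure

namespace RelStructure

variable {S : Type u} [Category.{v} S] {C : Type v} [SmallCategory C]
  {P : ModelStructure S} {D : Set C}

lemma dCofibrant_iff [HasColimits S] (U : RelStructure P C D) (X : C ⥤ S) :
    dCofibrant P D X ↔ U.N.cof (initial.to X) := by
  rw [dCofibrant, U.cof_eq]

variable [HasLimits S]

lemma fib_evaluationRightAdjoint_map (U : RelStructure P C D) {A B : S} {g : A ⟶ B}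
    (hg : P.fib g) (c : C) : U.N.fib ((evaluationRightAdjoint S c).map g) := by
  rw [U.fib_eq]
  intro d _
  refine P.fib_of_rlp fun _ _ f hw hf => ?_
  have := P.fib_lift f g hw hf hg
  change HasLiftingProperty f (Limits.Pi.map fun _ : d ⟶ c => g)
  infer_instance

lemma weq_app_of_weq_of_cof (U : RelStructure P C D) {X Y : C ⥤ S} {f : X ⟶ Y}
    (hw : U.N.weq f) (hc : U.N.cof f) (c : C) : P.weq (f.app c) :=
  P.weq_of_llp_fib fun _ _ g hg =>
    ((evaluationAdjunctionLeft S c).hasLiftingProperty_iff f g).2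
      (U.N.fib_lift f _ hw hc (U.fib_evaluationRightAdjoint_map hg c))

theorem weq_of_dCofibrant [HasColimits S] (U : RelStructure P C D) {X Y : C ⥤ S}
    {η : X ⟶ Y} (hη : objProp P.weq D η) (hX : dCofibrant P D X) (hY : dCofibrant P D Y) :
    objProp P.weq Set.univ η :=
  U.N.kenBrown (objProp P.weq Set.univ)
    (fun _ _ _ _ _ hf hg c _ => P.weq_comp _ _ (hf c trivial) (hg c trivial))
    (fun _ _ _ _ _ hf hfg c _ => P.weq_cancel_left _ _ (hf c trivial) (hfg c trivial))
    (fun _ _ _ _ hw hc c _ => U.weq_app_of_weq_of_cof hw hc c)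
    ((U.dCofibrant_iff X).1 hX) ((U.dCofibrant_iff Y).1 hY) (U.weq_eq ▸ hη)

end RelStructure

end Codescent

theorem statement_5_general {S : Type u} [Category.{v} S] [HasLimits S] [HasColimits S]
    (P : ModelStructure S)
    {C : Type v} [SmallCategory C] (D : Set C) (U : RelStructure P C D) :
    (∀ ⦃X Y : C ⥤ S⦄ (η : X ⟶ Y), objProp P.weq D η →
      dCofibrant P D X → dCofibrant P D Y → objProp P.weq Set.univ η) ∧
    (∀ ⦃X Y : C ⥤ S⦄ (η : X ⟶ Y), objProp P.weq D η →
      objProp P.weq Set.univ ((qFunctor U.N).map η)) :=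
  ⟨fun _ _ _ hη hX hY => U.weq_of_dCofibrant hη hX hY, fun _ _ _ hη =>
    U.weq_of_dCofibrant (U.weq_eq ▸ U.N.weq_qFunctor_map (U.weq_eq ▸ hη))
      ((U.dCofibrant_iff _).2 (U.N.cof_initial_to_qFunctor_obj _))
      ((U.dCofibrant_iff _).2 (U.N.cof_initial_to_qFunctor_obj _))⟩

/-- rigidity of cofibrant objects; the cofibrant replacement takes
`D`-weak equivalences to `C`-weak equivalences (Balmer–Matthey, Prop. 5.1). -/
theorem statement_5 {S : Type u} [Category.{v} S] [HasLimits S] [HasColimits S]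
    (P : ModelStructure S) (I J : MorphismProperty S) (hcg : IsCofGen P I J)
    {C : Type v} [SmallCategory C] (D : Set C) (U : RelStructure P C D) :
    (∀ ⦃X Y : C ⥤ S⦄ (η : X ⟶ Y), objProp P.weq D η →
      dCofibrant P D X → dCofibrant P D Y → objProp P.weq Set.univ η) ∧
    (∀ ⦃X Y : C ⥤ S⦄ (η : X ⟶ Y), objProp P.weq D η →
      objProp P.weq Set.univ ((qFunctor U.N).map η)) :=
  statement_5_general P D U
end

section
/- Let S be a cofibrantly generated model category and Φ : (A, B) → (C, D) a morphism of pairs of small categories such that (a) D = Φ(B) as sets of objects, and (b) Φ is left glossy. Then the precomposition functor Φ^* and the right Kan extension Φ_! : S^A → S^C form a Quillen adjunction Φ^* : U_S(C,D) ⇄ U_S(A,B) : Φ_!. In particular, Φ^* preserves cofibrations and fibrations, and a morphism η in S^C is a D-weak equivalence if and only if Φ^*(η) is a B-weak equivalence. -/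
/-! Preliminaries: basic notions of homotopical algebra (lifting properties,
model structures, transfinite compositions, relative cell complexes, smallness,
cofibrant generation) and the relative model structure `U_S(C,D)` on functor
categories, following Balmer–Matthey, "Codescent theory I". -/

universe w v u u₂ u₃

open CategoryTheory Limits

open Codescent

/-! Left glossiness says that the comma category `Φ(b) ↓ Φ` is the disjoint union over `i` of
the categories `b_i ↓ A`, each with initial object `(b_i, 𝟙)`, so that `(Φ_! Y)(Φ b) ≅ ∏ᵢ Y(b_i)`.
Trivial fibrations of a cofibrantly generated model category form a right lifting class, hence
are stable under products, so `Φ_!` sends trivial `B`-fibrations to trivial `D`-fibrations and,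
by adjunction, `Φ^*` preserves cofibrations. Weak equivalences and fibrations are tested
objectwise on `D = Φ(B)`, where `Φ^*` does not change the components. -/

namespace Codescent

section RanOfUniqueFactorization

variable {A C H : Type*} [Category A] [Category C] [Category H] (Φ : A ⥤ C)

lemma initial_discreteFunctor_of_existsUnique_fac {c : C} {ι : Type*} {tgt : ι → A}
    (β : ∀ i, c ⟶ Φ.obj (tgt i))
    (hfac : ∀ (a : A) (α : c ⟶ Φ.obj a), ∃! p : (i : ι) × (tgt i ⟶ a), β p.1 ≫ Φ.map p.2 = α) :
    (Discrete.functor fun i => StructuredArrow.mk (β i)).Initial where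
  out j := by
    obtain ⟨⟨i, γ⟩, hγ, -⟩ := hfac j.right j.hom
    have : Nonempty (CostructuredArrow (Discrete.functor fun i => StructuredArrow.mk (β i)) j) :=
      ⟨CostructuredArrow.mk (Y := Discrete.mk i)
        (StructuredArrow.homMk γ hγ : StructuredArrow.mk (β i) ⟶ j)⟩
    refine zigzag_isConnected fun x y => ?_
    obtain ⟨⟨i₁⟩, ⟨⟨⟩⟩, f₁⟩ := x
    obtain ⟨⟨i₂⟩, ⟨⟨⟩⟩, f₂⟩ := y
    have h := (hfac j.right j.hom).unique (y₁ := ⟨i₁, f₁.right⟩) (y₂ := ⟨i₂, f₂.right⟩)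
      (StructuredArrow.w f₁) (StructuredArrow.w f₂)
    obtain ⟨rfl, hf⟩ := Sigma.mk.inj_iff.mp h
    obtain rfl : f₁ = f₂ := StructuredArrow.hom_ext _ _ (eq_of_heq hf)
    rfl

variable [∀ F : A ⥤ H, Φ.HasPointwiseRightKanExtension F]

lemma ran_map_app_comp_coneAt_π {X Y : A ⥤ H} (g : X ⟶ Y) {c : C} (j : StructuredArrow c Φ) :
    (Φ.ran.map g).app c ≫ ((Functor.RightExtension.mk _ (Φ.ranCounit.app Y)).coneAt c).π.app j =
      ((Functor.RightExtension.mk _ (Φ.ranCounit.app X)).coneAt c).π.app j ≫ g.app j.right := by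
  have hcounit := congr_app (Φ.ranCounit.naturality g) j.right
  dsimp at hcounit
  change (Φ.ran.map g).app c ≫ (Φ.ran.obj Y).map j.hom ≫ (Φ.ranCounit.app Y).app j.right =
    ((Φ.ran.obj X).map j.hom ≫ (Φ.ranCounit.app X).app j.right) ≫ g.app j.right
  rw [← NatTrans.naturality_assoc, hcounit, Category.assoc]

lemma ran_map_app_mem_of_existsUnique_fac {c : C} {ι : Type*} {tgt : ι → A}
    (β : ∀ i, c ⟶ Φ.obj (tgt i))
    (hfac : ∀ (a : A) (α : c ⟶ Φ.obj a), ∃! p : (i : ι) × (tgt i ⟶ a), β p.1 ≫ Φ.map p.2 = α)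
    (W : MorphismProperty H) [W.IsStableUnderProductsOfShape ι] {X Y : A ⥤ H} (g : X ⟶ Y)
    (hg : ∀ i, W (g.app (tgt i))) : W ((Φ.ran.map g).app c) := by
  have := initial_discreteFunctor_of_existsUnique_fac Φ β hfac
  exact MorphismProperty.IsStableUnderLimitsOfShape.condition _ _ _ _
    ((Functor.Initial.isLimitWhiskerEquiv _ _).symm
      (Φ.isPointwiseRightKanExtensionRanCounit X c))
    ((Functor.Initial.isLimitWhiskerEquiv _ _).symm
      (Φ.isPointwiseRightKanExtensionRanCounit Y c))
    (Functor.whiskerLeft (Discrete.functor fun i => StructuredArrow.mk (β i))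
      (Functor.whiskerLeft (StructuredArrow.proj c Φ) g))
    (fun i => hg i.as) _ (fun i => ran_map_app_comp_coneAt_π Φ g _)

end RanOfUniqueFactorization

lemma llp_map_of_adjunction {C D : Type*} [Category C] [Category D] {G : C ⥤ D} {F : D ⥤ C}
    (adj : G ⊣ F) {K : MorphismProperty C} {K' : MorphismProperty D}
    (hF : ∀ ⦃X Y : D⦄ (p : X ⟶ Y), K' p → K (F.map p)) ⦃X Y : C⦄ {i : X ⟶ Y}
    (hi : llp K i) : llp K' (G.map i) :=
  fun _ _ p hp => (adj.hasLiftingProperty_iff i p).2 (hi _ (hF p hp))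

variable {S : Type u} [Category.{v} S] {A : Type v} [SmallCategory A] {C : Type v}
  [SmallCategory C]

lemma objProp_image_iff (Q : MorphismProperty S) (Φ : A ⥤ C) (B : Set A) {X Y : C ⥤ S}
    (η : X ⟶ Y) :
    objProp Q (Φ.obj '' B) η ↔ objProp Q B (((Functor.whiskeringLeft A C S).obj Φ).map η) :=
  ⟨fun h b hb => h (Φ.obj b) ⟨b, hb, rfl⟩, fun h _ ⟨b, hb, hd⟩ => hd ▸ h b hb⟩

lemma dTrivFib_ran_map [HasLimits S] {P : ModelStructure S} {I : MorphismProperty S}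
    (hI : inter P.weq P.fib = rlp I) {Φ : A ⥤ C} {B : Set A} (hgl : LeftGlossy Φ B)
    {X Y : A ⥤ S} {g : X ⟶ Y} (hg : dTrivFib P B g) : dTrivFib P (Φ.obj '' B) (Φ.ran.map g) := by
  have htriv : ∀ ⦃c : C⦄, c ∈ Φ.obj '' B → inter P.weq P.fib ((Φ.ran.map g).app c) := by
    rintro _ ⟨b, hb, rfl⟩
    obtain ⟨ι, tgt, β, htgt, hfac⟩ := hgl b hb
    rw [hI]
    exact ran_map_app_mem_of_existsUnique_fac Φ β hfac I.rlp g fun i =>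
      (hI ▸ ⟨hg.1 _ (htgt i), hg.2 _ (htgt i)⟩ : rlp I _)
  exact ⟨fun c hc => (htriv hc).1, fun c hc => (htriv hc).2⟩

end Codescent

theorem statement_11_general {S : Type u} [Category.{v} S] [HasLimits S]
    (P : ModelStructure S) (I J : MorphismProperty S) (hcg : IsCofGen P I J)
    {A : Type v} [SmallCategory A] {C : Type v} [SmallCategory C]
    (Φ : A ⥤ C) (B : Set A) (D : Set C)
    (hD : D = Φ.obj '' B) (hgl : LeftGlossy Φ B) :
    Nonempty ((Functor.whiskeringLeft A C S).obj Φ ⊣ Φ.ran) ∧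
    (∀ ⦃X Y : C ⥤ S⦄ (η : X ⟶ Y), dCof P D η →
      dCof P B (((Functor.whiskeringLeft A C S).obj Φ).map η)) ∧
    (∀ ⦃X Y : C ⥤ S⦄ (η : X ⟶ Y), objProp P.weq D η → dCof P D η →
      objProp P.weq B (((Functor.whiskeringLeft A C S).obj Φ).map η) ∧
        dCof P B (((Functor.whiskeringLeft A C S).obj Φ).map η)) ∧
    (∀ ⦃X Y : C ⥤ S⦄ (η : X ⟶ Y), objProp P.fib D η →
      objProp P.fib B (((Functor.whiskeringLeft A C S).obj Φ).map η)) ∧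
    (∀ ⦃X Y : C ⥤ S⦄ (η : X ⟶ Y),
      objProp P.weq D η ↔ objProp P.weq B (((Functor.whiskeringLeft A C S).obj Φ).map η)) := by
  subst hD
  have hcof : ∀ ⦃X Y : C ⥤ S⦄ (η : X ⟶ Y), dCof P (Φ.obj '' B) η →
      dCof P B (((Functor.whiskeringLeft A C S).obj Φ).map η) := fun _ _ _ hη =>
    llp_map_of_adjunction (Φ.ranAdjunction S)
      (fun _ _ _ hg => dTrivFib_ran_map hcg.trivFib_eq hgl hg) hη
  exact ⟨⟨Φ.ranAdjunction S⟩, hcof,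
    fun _ _ η hw hc => ⟨(objProp_image_iff _ Φ B η).1 hw, hcof η hc⟩,
    fun _ _ η => (objProp_image_iff _ Φ B η).1, fun _ _ η => objProp_image_iff _ Φ B η⟩

/-- for a left glossy morphism of pairs with `D = Φ(B)`, the
functors `Φ^*` and `Φ_!` form a Quillen adjunction `U_S(C,D) ⇄ U_S(A,B)`
(Balmer–Matthey, Theorem 7.6). -/
theorem statement_11 {S : Type u} [Category.{v} S] [HasLimits S] [HasColimits S]
    (P : ModelStructure S) (I J : MorphismProperty S) (hcg : IsCofGen P I J)
    {A : Type v} [SmallCategory A] {C : Type v} [SmallCategory C]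
    (Φ : A ⥤ C) (B : Set A) (D : Set C)
    (hD : D = Φ.obj '' B) (hgl : LeftGlossy Φ B) :
    Nonempty ((Functor.whiskeringLeft A C S).obj Φ ⊣ Φ.ran) ∧
    (∀ ⦃X Y : C ⥤ S⦄ (η : X ⟶ Y), dCof P D η →
      dCof P B (((Functor.whiskeringLeft A C S).obj Φ).map η)) ∧
    (∀ ⦃X Y : C ⥤ S⦄ (η : X ⟶ Y), objProp P.weq D η → dCof P D η →
      objProp P.weq B (((Functor.whiskeringLeft A C S).obj Φ).map η) ∧
        dCof P B (((Functor.whiskeringLeft A C S).obj Φ).map η)) ∧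
    (∀ ⦃X Y : C ⥤ S⦄ (η : X ⟶ Y), objProp P.fib D η →
      objProp P.fib B (((Functor.whiskeringLeft A C S).obj Φ).map η)) ∧
    (∀ ⦃X Y : C ⥤ S⦄ (η : X ⟶ Y),
      objProp P.weq D η ↔ objProp P.weq B (((Functor.whiskeringLeft A C S).obj Φ).map η)) :=
  statement_11_general P I J hcg Φ B D hD hgl
end
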